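/- Let R be a commutative ring, α, β ∈ R, and n ≥ 2. The group endomorphism of B_n determined by b_i ↦ b_i⁻¹ (which is a well-defined automorphism since the Artin relations are palindromic) induces an R-algebra isomorphism φ : H(Q_{−β,−α}, n) → H(Q_{α,β}, n); indeed in H(Q_{α,β}, n) one has (b_i⁻¹)³ + β(b_i⁻¹)² + α·b_i⁻¹ − 1 = −b_i⁻³·(b_i³ − α·b_i² − β·b_i − 1) = 0. Moreover φ maps the two-sided ideal I_n of H(Q_{−β,−α}, n) onto the two-sided ideal I_n of H(Q_{α,β}, n) (in particular the image of R₀ with parameters (−β,−α) equals b₁·R₀ computed with parameters (α,β)), and hence φ induces an R-algebra isomorphism K_n(−β,−α) ≅ K_n(α,β). -/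

import Mathlib

def braidRels (m : ℕ) : Set (FreeGroup (Fin m)) :=
  { r | (∃ i j : Fin m, (i : ℕ) + 1 < (j : ℕ) ∧
          r = FreeGroup.of i * FreeGroup.of j * (FreeGroup.of i)⁻¹ * (FreeGroup.of j)⁻¹) ∨
        (∃ i j : Fin m, (j : ℕ) = (i : ℕ) + 1 ∧
          r = FreeGroup.of i * FreeGroup.of j * FreeGroup.of i *
              (FreeGroup.of j * FreeGroup.of i * FreeGroup.of j)⁻¹) }

abbrev BraidGroup (n : ℕ) := PresentedGroup (braidRels (n - 1))

def braidGen (n : ℕ) (i : Fin (n - 1)) : BraidGroup n := PresentedGroup.of i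

theorem braid_mk_eq_one {m : ℕ} {r : FreeGroup (Fin m)} (hr : r ∈ braidRels m) :
    PresentedGroup.mk (braidRels m) r = 1 :=
  (QuotientGroup.eq_one_iff r).mpr (Subgroup.subset_normalClosure hr)

noncomputable def braidIncl (n : ℕ) : BraidGroup n →* BraidGroup (n + 1) :=
  PresentedGroup.toGroup
    (f := fun i => braidGen (n + 1) (Fin.castLE (by omega : n - 1 ≤ n + 1 - 1) i))
    (by
      rintro r (⟨i, j, hij, rfl⟩ | ⟨i, j, hij, rfl⟩)
      · have h1 := braid_mk_eq_one (m := n + 1 - 1)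
          (Or.inl ⟨Fin.castLE (by omega) i, Fin.castLE (by omega) j, by simpa using hij, rfl⟩)
        simp only [map_mul, map_inv, FreeGroup.lift_apply_of] at h1 ⊢
        exact h1
      · have h1 := braid_mk_eq_one (m := n + 1 - 1)
          (Or.inr ⟨Fin.castLE (by omega) i, Fin.castLE (by omega) j, by simpa using hij, rfl⟩)
        simp only [map_mul, map_inv, FreeGroup.lift_apply_of] at h1 ⊢
        exact h1)

theorem braidIncl_gen (n : ℕ) (i : Fin (n - 1)) :
    braidIncl n (braidGen n i) = braidGen (n + 1) (Fin.castLE (by omega) i) :=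
  PresentedGroup.toGroup.of _

variable (R : Type) [CommRing R]

noncomputable def gb (n : ℕ) (i : Fin (n - 1)) : MonoidAlgebra R (BraidGroup n) :=
  MonoidAlgebra.of R (BraidGroup n) (braidGen n i)

inductive cubicRel (α β : R) (n : ℕ) :
    MonoidAlgebra R (BraidGroup n) → MonoidAlgebra R (BraidGroup n) → Prop
  | cube (i : Fin (n - 1)) :
      cubicRel α β n (gb R n i ^ 3) (α • gb R n i ^ 2 + β • gb R n i + 1)

abbrev CubicHecke (α β : R) (n : ℕ) := RingQuot (cubicRel R α β n)

noncomputable def hb (α β : R) (n : ℕ) (i : Fin (n - 1)) : CubicHecke R α β n :=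
  RingQuot.mkAlgHom R (cubicRel R α β n) (gb R n i)

theorem mapDomain_gb (n : ℕ) (i : Fin (n - 1)) :
    (MonoidAlgebra.mapDomainAlgHom R R (braidIncl n)) (gb R n i)
      = gb R (n + 1) (Fin.castLE (by omega) i) := by
  simp only [gb, MonoidAlgebra.mapDomainAlgHom_apply, MonoidAlgebra.of_apply,
    MonoidAlgebra.mapDomain_single, braidIncl_gen]

noncomputable def heckeIncl (α β : R) (n : ℕ) :
    CubicHecke R α β n →ₐ[R] CubicHecke R α β (n + 1) :=
  RingQuot.liftAlgHom R
    ⟨(RingQuot.mkAlgHom R (cubicRel R α β (n + 1))).comp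
        (MonoidAlgebra.mapDomainAlgHom R R (braidIncl n)),
      by
        rintro x y ⟨i⟩
        have h2 : (MonoidAlgebra.mapDomainAlgHom R R (braidIncl n)) (gb R n i ^ 3)
            = gb R (n + 1) (Fin.castLE (by omega) i) ^ 3 := by
          rw [map_pow, mapDomain_gb]
        have h3 : (MonoidAlgebra.mapDomainAlgHom R R (braidIncl n))
              (α • gb R n i ^ 2 + β • gb R n i + 1)
            = α • gb R (n + 1) (Fin.castLE (by omega) i) ^ 2
              + β • gb R (n + 1) (Fin.castLE (by omega) i) + 1 := by
          rw [map_add, map_add, map_smul, map_smul, map_pow, map_one, mapDomain_gb]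
        simp only [AlgHom.comp_apply, h2, h3]
        exact RingQuot.mkAlgHom_rel R (cubicRel.cube _)⟩

theorem heckeIncl_gen (α β : R) (n : ℕ) (i : Fin (n - 1)) :
    heckeIncl R α β n (hb R α β n i) = hb R α β (n + 1) (Fin.castLE (by omega) i) := by
  simp only [heckeIncl, hb, RingQuot.liftAlgHom_mkAlgHom_apply, AlgHom.comp_apply, mapDomain_gb]

noncomputable def R0elt {A : Type*} [Ring A] [Algebra R A] (α β : R) (x y : A) : A :=
  y * x ^ 2 * y
  + (β ^ 2 - α) • (x ^ 2 * y ^ 2 * x ^ 2)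
  + (α ^ 2 - α * β ^ 2 - β) • (x * y ^ 2 * x ^ 2 + x ^ 2 * y ^ 2 * x)
  + (α ^ 2 - α * β ^ 2) • (x ^ 2 * y * x ^ 2)
  + (1 + 2 * α * β + α ^ 2 * β ^ 2 - α ^ 3) • (x * y ^ 2 * x)
  + (1 + α * β + α ^ 2 * β ^ 2 - α ^ 3) • (x * y * x ^ 2 + x ^ 2 * y * x)
  + (1 + 2 * α * β - β ^ 3) • (y ^ 2 * x ^ 2 + x ^ 2 * y ^ 2)
  + (α * β ^ 3 - 2 * α - 2 * α ^ 2 * β) • (y * x ^ 2 + x ^ 2 * y)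
  + (α * β ^ 3 - 2 * α - 2 * α ^ 2 * β + β ^ 2) • (y ^ 2 * x + x * y ^ 2)
  + (α ^ 4 - α ^ 3 * β ^ 2 - 2 * α ^ 2 * β - 3 * α) • (x * y * x)
  + (2 * α ^ 3 * β + 3 * α ^ 2 - α ^ 2 * β ^ 3 - α * β ^ 2) • (y * x + x * y)
  + (β ^ 4 - 2 * β - 3 * α * β ^ 2 + α ^ 2) • (x ^ 2 + y ^ 2)
  + (1 + 4 * α * β + 3 * α ^ 2 * β ^ 2 - α ^ 3 - α * β ^ 4 - β ^ 3) • x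
  + (1 + 3 * α * β + 3 * α ^ 2 * β ^ 2 - α ^ 3 - α * β ^ 4) • y
  + algebraMap R A (3 * β ^ 2 - β ^ 5 - 2 * α - 3 * α ^ 2 * β + 4 * α * β ^ 3)

theorem map_R0elt {A B : Type*} [Ring A] [Ring B] [Algebra R A] [Algebra R B]
    (f : A →ₐ[R] B) (α β : R) (x y : A) :
    f (R0elt R α β x y) = R0elt R α β (f x) (f y) := by
  simp only [R0elt, map_add, map_mul, map_pow, map_smul, AlgHom.commutes]

inductive KRel (α β : R) (n : ℕ) : CubicHecke R α β n → CubicHecke R α β n → Prop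
  | r0 (j : Fin (n - 1)) (h : (j : ℕ) + 1 < n - 1) :
      KRel α β n (R0elt R α β (hb R α β n j) (hb R α β n ⟨(j : ℕ) + 1, h⟩)) 0

abbrev KAlg (α β : R) (n : ℕ) := RingQuot (KRel R α β n)

noncomputable def towerIncl (α β : R) (n : ℕ) :
    KAlg R α β n →ₐ[R] KAlg R α β (n + 1) :=
  RingQuot.liftAlgHom R
    ⟨(RingQuot.mkAlgHom R (KRel R α β (n + 1))).comp (heckeIncl R α β n),
      by
        rintro x y ⟨j, h⟩
        have hle : n - 1 ≤ n + 1 - 1 := by omega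
        have hlt : ((Fin.castLE hle j : Fin (n + 1 - 1)) : ℕ) + 1 < n + 1 - 1 := by
          simp only [Fin.coe_castLE]; omega
        have e3 : Fin.castLE hle ⟨(j : ℕ) + 1, h⟩
            = (⟨((Fin.castLE hle j : Fin (n + 1 - 1)) : ℕ) + 1, hlt⟩ : Fin (n + 1 - 1)) := by
          ext; simp
        rw [AlgHom.comp_apply, AlgHom.comp_apply, map_R0elt R (heckeIncl R α β n),
          heckeIncl_gen, heckeIncl_gen, e3, map_zero (heckeIncl R α β n)]
        exact RingQuot.mkAlgHom_rel R (KRel.r0 (Fin.castLE hle j) hlt)⟩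

/-- The class of the inverse `b_{i+1}⁻¹` in the cubic Hecke algebra. -/
noncomputable def hbInv (α β : R) (n : ℕ) (i : Fin (n - 1)) : CubicHecke R α β n :=
  RingQuot.mkAlgHom R (cubicRel R α β n)
    (MonoidAlgebra.of R (BraidGroup n) (braidGen n i)⁻¹)

/-- The class of the generator `b_{i+1}` in `K_n(α,β)`. -/
noncomputable def kb (α β : R) (n : ℕ) (i : Fin (n - 1)) : KAlg R α β n :=
  RingQuot.mkAlgHom R (KRel R α β n) (hb R α β n i)

/-- The class of `b_{i+1}⁻¹` in `K_n(α,β)`. -/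
noncomputable def kbInv (α β : R) (n : ℕ) (i : Fin (n - 1)) : KAlg R α β n :=
  RingQuot.mkAlgHom R (KRel R α β n) (hbInv R α β n i)

/-- The iterated tower map `K_n(α,β) → K_{n+k}(α,β)`. -/
noncomputable def towerInclMany (α β : R) (n : ℕ) :
    (k : ℕ) → (KAlg R α β n →ₐ[R] KAlg R α β (n + k))
  | 0 => AlgHom.id R _
  | k + 1 => (towerIncl R α β (n + k)).comp (towerInclMany α β n k)

/-- The class of the generator `b_n` in `K_{n+1}(α,β)` (for `n ≥ 1`). -/
noncomputable def lastGen (α β : R) (n : ℕ) (h : 1 ≤ n) : KAlg R α β (n + 1) :=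
  kb R α β (n + 1) ⟨n - 1, by omega⟩

/-- The class of `b_n⁻¹` in `K_{n+1}(α,β)` (for `n ≥ 1`). -/
noncomputable def lastGenInv (α β : R) (n : ℕ) (h : 1 ≤ n) : KAlg R α β (n + 1) :=
  kbInv R α β (n + 1) ⟨n - 1, by omega⟩

/-- An admissible functional with parameters `(z, z̄)` on the tower of the algebras
`K_n(α,β)`: a compatible family of `R`-linear functionals satisfying the Markov-type
conditions for the last generator and its inverse. -/
structure AdmissibleFunctional (α β z zbar : R) : Type _ where
  T : ∀ n : ℕ, KAlg R α β n →ₗ[R] R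
  compat : ∀ (n : ℕ) (x : KAlg R α β n), T (n + 1) (towerIncl R α β n x) = T n x
  cond_z : ∀ (n : ℕ) (h : 1 ≤ n) (x y : KAlg R α β n),
      T (n + 1) (towerIncl R α β n x * lastGen R α β n h * towerIncl R α β n y)
        = z * T n (x * y)
  cond_zbar : ∀ (n : ℕ) (h : 1 ≤ n) (x y : KAlg R α β n),
      T (n + 1) (towerIncl R α β n x * lastGenInv R α β n h * towerIncl R α β n y)
        = zbar * T n (x * y)

/-- A Markov trace is an admissible functional each of whose components is a trace. -/
def AdmissibleFunctional.IsMarkov {α β z zbar : R}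
    (T : AdmissibleFunctional R α β z zbar) : Prop :=
  ∀ (n : ℕ) (a b : KAlg R α β n), T.T n (a * b) = T.T n (b * a)

/-- A normalized functional takes the value `1` on the unit of `K₁(α,β)`. -/
def AdmissibleFunctional.IsNormalized {α β z zbar : R}
    (T : AdmissibleFunctional R α β z zbar) : Prop :=
  T.T 1 1 = 1

/-!
Inverting every generator is an automorphism of the braid group, because the braid relations are
palindromic. In any algebra an element `x` with `x³ = αx² + βx + 1` has the two-sided inverse
`x² - αx - β`, and this inverse satisfies the cubic relation with parameters `(-β, -α)`; hence
`b_i ↦ b_i⁻¹` induces `H(Q_{-β,-α}, n) ≅ H(Q_{α,β}, n)`. The one computation is the identity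
`R₀(-β,-α)(x⁻¹, y⁻¹) = x R₀(α,β)(x, y)` for `x, y` satisfying the cubic and braid relations. As `x`
is a unit, it shows that the isomorphism and its inverse send the generators of `I_n` into `I_n`,
so `I_n` is mapped onto `I_n` and the isomorphism descends to the quotients `K_n`.
-/

namespace RingQuot

variable {S A B : Type*} [CommSemiring S] [Semiring A] [Algebra S A] [Semiring B] [Algebra S B]
  {r : A → A → Prop} {s : B → B → Prop}

theorem mkAlgHom_eq_zero {a : A} (h : r a 0) : mkAlgHom S r a = 0 := by
  rw [mkAlgHom_rel S h, map_zero]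

def algEquivOfRel (e : A ≃ₐ[S] B)
    (hr : ∀ ⦃a b⦄, r a b → mkAlgHom S s (e a) = mkAlgHom S s (e b))
    (hs : ∀ ⦃a b⦄, s a b → mkAlgHom S r (e.symm a) = mkAlgHom S r (e.symm b)) :
    RingQuot r ≃ₐ[S] RingQuot s :=
  AlgEquiv.ofAlgHom (liftAlgHom S ⟨(mkAlgHom S s).comp e, fun _ _ h ↦ by simpa using hr h⟩)
    (liftAlgHom S ⟨(mkAlgHom S r).comp e.symm, fun _ _ h ↦ by simpa using hs h⟩)
    (by ext; simp) (by ext; simp)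

theorem algEquivOfRel_mkAlgHom (e : A ≃ₐ[S] B)
    (hr : ∀ ⦃a b⦄, r a b → mkAlgHom S s (e a) = mkAlgHom S s (e b))
    (hs : ∀ ⦃a b⦄, s a b → mkAlgHom S r (e.symm a) = mkAlgHom S r (e.symm b)) (a : A) :
    algEquivOfRel e hr hs (mkAlgHom S r a) = mkAlgHom S s (e a) :=
  liftAlgHom_mkAlgHom_apply S _ _ a

end RingQuot

theorem TwoSidedIdeal.image_span_eq_span {A B : Type*} [Ring A] [Ring B] (e : A ≃+* B)
    {s : Set A} {t : Set B} (hs : ∀ a ∈ s, e a ∈ span t) (ht : ∀ b ∈ t, e.symm b ∈ span s) :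
    e '' span s = span t := by
  have hst : span s ≤ comap e (span t) := span_le.mpr fun a ha ↦ (mem_comap _).mpr (hs a ha)
  have hts : span t ≤ comap e.symm (span s) := span_le.mpr fun b hb ↦ (mem_comap _).mpr (ht b hb)
  refine subset_antisymm ?_ fun b hb ↦ ⟨e.symm b, (mem_comap _).mp (hts hb), e.apply_symm_apply b⟩
  rintro _ ⟨a, ha, rfl⟩
  exact (mem_comap _).mp (hst ha)

theorem lift_inv_braidRels {G : Type*} [Group G] {m : ℕ} {f : Fin m → G}
    (hf : ∀ r ∈ braidRels m, FreeGroup.lift f r = 1) :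
    ∀ r ∈ braidRels m, FreeGroup.lift (fun i ↦ (f i)⁻¹) r = 1 := by
  rintro r (⟨i, j, hij, rfl⟩ | ⟨i, j, hij, rfl⟩)
  · have h := hf _ (Or.inl ⟨i, j, hij, rfl⟩)
    simp only [map_mul, map_inv, FreeGroup.lift_apply_of] at h ⊢
    exact commutatorElement_eq_one_iff_commute.mpr
      (commutatorElement_eq_one_iff_commute.mp h).inv_inv
  · have h := hf _ (Or.inr ⟨i, j, hij, rfl⟩)
    simp only [map_mul, map_inv, FreeGroup.lift_apply_of, mul_inv_eq_one] at h ⊢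
    rw [← mul_inv_rev, ← mul_inv_rev, ← mul_inv_rev, ← mul_inv_rev, ← mul_assoc, ← mul_assoc, h]

noncomputable def braidInvHom (n : ℕ) : BraidGroup n →* BraidGroup n :=
  PresentedGroup.toGroup <| lift_inv_braidRels fun _ hr ↦
    (FreeGroup.lift_unique (PresentedGroup.mk _) fun _ ↦ rfl).symm.trans (braid_mk_eq_one hr)

theorem braidInvHom_gen (n : ℕ) (i : Fin (n - 1)) :
    braidInvHom n (braidGen n i) = (braidGen n i)⁻¹ :=
  PresentedGroup.toGroup.of _

theorem braidInvHom_comp_self (n : ℕ) : (braidInvHom n).comp (braidInvHom n) = .id _ :=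
  PresentedGroup.ext fun i ↦ by
    simp only [MonoidHom.comp_apply, MonoidHom.id_apply]
    rw [← braidGen, braidInvHom_gen, map_inv, braidInvHom_gen, inv_inv]

noncomputable def braidInv (n : ℕ) : BraidGroup n ≃* BraidGroup n :=
  (braidInvHom n).toMulEquiv (braidInvHom n) (braidInvHom_comp_self n) (braidInvHom_comp_self n)

theorem braidInv_gen (n : ℕ) (i : Fin (n - 1)) : braidInv n (braidGen n i) = (braidGen n i)⁻¹ :=
  braidInvHom_gen n i

theorem braidInv_symm_gen (n : ℕ) (i : Fin (n - 1)) :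
    (braidInv n).symm (braidGen n i) = (braidGen n i)⁻¹ :=
  braidInvHom_gen n i

variable {R}

section CubicInverse

variable {A : Type*} [Ring A] [Algebra R A] {α β : R} {x y u v : A}

theorem mul_quadratic_eq_one (hx : x ^ 3 = α • x ^ 2 + β • x + 1) :
    x * (x ^ 2 - α • x - β • 1) = 1 := by
  rw [mul_sub, mul_sub, mul_smul_comm, mul_smul_comm, mul_one, ← pow_succ', ← pow_two, hx]
  module

theorem eq_quadratic_of_mul_eq_one (hx : x ^ 3 = α • x ^ 2 + β • x + 1) (hu : u * x = 1) :
    u = x ^ 2 - α • x - β • 1 :=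
  left_inv_eq_right_inv hu (mul_quadratic_eq_one hx)

theorem mul_eq_one_symm_of_cubic (hx : x ^ 3 = α • x ^ 2 + β • x + 1) (hu : u * x = 1) :
    x * u = 1 :=
  eq_quadratic_of_mul_eq_one hx hu ▸ mul_quadratic_eq_one hx

theorem inv_cubic_sub_eq (hu : u * x = 1) :
    u ^ 3 + β • u ^ 2 + α • u - 1 = -(u ^ 3 * (x ^ 3 - α • x ^ 2 - β • x - 1)) := by
  have h1 : u ^ 3 * x = u ^ 2 := by rw [pow_succ, mul_assoc, hu, mul_one]
  have h2 : u ^ 3 * x ^ 2 = u := by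
    rw [pow_two, ← mul_assoc, h1, pow_two, mul_assoc, hu, mul_one]
  have h3 : u ^ 3 * x ^ 3 = 1 := by rw [pow_succ x 2, ← mul_assoc, h2, hu]
  rw [mul_sub, mul_sub, mul_sub, mul_smul_comm, mul_smul_comm, h1, h2, h3, mul_one]
  module

theorem inv_cubic_eq_zero (hx : x ^ 3 = α • x ^ 2 + β • x + 1) (hu : u * x = 1) :
    u ^ 3 + β • u ^ 2 + α • u - 1 = 0 := by
  rw [inv_cubic_sub_eq hu, hx, neg_eq_zero]
  convert mul_zero (u ^ 3) using 2
  abel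

theorem inv_cubic (hx : x ^ 3 = α • x ^ 2 + β • x + 1) (hu : u * x = 1) :
    u ^ 3 = (-β) • u ^ 2 + (-α) • u + 1 := by
  linear_combination (norm := module) inv_cubic_eq_zero hx hu

theorem inv_mul_inv_eq (hx : x ^ 3 = α • x ^ 2 + β • x + 1) (hu : u * x = 1) :
    u * u = x - β • u - α • 1 := by
  have hxu := mul_eq_one_symm_of_cubic hx hu
  calc u * u = x * u ^ 3 := by rw [pow_succ', ← mul_assoc, hxu, one_mul, pow_two]
    _ = x - β • u - α • 1 := by
      rw [inv_cubic hx hu, mul_add, mul_add, mul_smul_comm, mul_smul_comm, pow_two,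
        ← mul_assoc, hxu, one_mul, mul_one]
      module

-- `key` is an ideal-membership certificate with machine-computed coefficients; once `u`, `v`,
-- `u * u` and `v * v` are eliminated it is an identity in the free algebra on `x` and `y`.
set_option maxHeartbeats 1000000 in
theorem R0elt_neg_swap_of_mul_eq_one (hx : x ^ 3 = α • x ^ 2 + β • x + 1)
    (hy : y ^ 3 = α • y ^ 2 + β • y + 1) (hxy : x * y * x = y * x * y)
    (hu : u * x = 1) (hv : v * y = 1) :
    R0elt R (-β) (-α) u v = x * R0elt R α β x y := by
  have hu2 := inv_mul_inv_eq hx hu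
  have hv2 := inv_mul_inv_eq hy hv
  have hu1 := eq_quadratic_of_mul_eq_one hx hu
  have hv1 := eq_quadratic_of_mul_eq_one hy hv
  have key : ∀ gx gy br : A, gx = x ^ 3 - (α • x ^ 2 + β • x + 1) →
      gy = y ^ 3 - (α • y ^ 2 + β • y + 1) → br = y * x * y - x * y * x →
      R0elt R (-β) (-α) u v = x * R0elt R α β x y +
        (-β ^ 4 + 3 * α * β ^ 2 - 2 * α ^ 2) • gx + (-α) • (gx * x)
        + (-β ^ 2 + 2 * α - α * β ^ 3 + 2 * α ^ 2 * β) • (gx * y)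
        + (-1 - α * β - α ^ 2 * β ^ 2 + α ^ 3) • (gx * y * x)
        + (α * β ^ 2 - α ^ 2) • (gx * y * x * x) + (α ^ 2 * β) • (gx * y * x * x * y)
        + (-α * β) • (gx * y * x * x * y * y) + (-1 + β ^ 3 - 2 * α * β) • (gx * y * y)
        + (β + α * β ^ 2 - α ^ 2) • (gx * y * y * x) + (-β ^ 2 + α) • (gx * y * y * x * x)
        + (-α * β ^ 2 + α ^ 2) • gy + (β ^ 2 - α) • (gy * y) + (α ^ 2 + α ^ 3 * β) • br
        + (-α - α ^ 2 * β) • (br * x) + (-α * β ^ 2) • (br * x * x * y)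
        + (β ^ 2) • (br * x * x * y * y) + (1 + α * β) • (br * x * y)
        + (-α ^ 2 * β) • (br * x * y * x * y) + (α * β) • (br * x * y * x * y * x)
        + (-β) • (br * x * y * x * y * x * y) + (α * β) • (br * x * y * x * y * y)
        + (-α - α ^ 2 * β) • (br * y) + (-α * β) • (x * gx * y * x * x * y) + (β ^ 2) • (x * gy)
        + (-α - α * β ^ 3 - α ^ 2 * β) • (x * br) + (α * β - α ^ 2 * β ^ 2) • (x * br * x)
        + (α * β ^ 2) • (x * br * x * x) + (α * β ^ 2 - α ^ 3 * β) • (x * br * x * y)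
        + (α ^ 2 * β) • (x * br * x * y * x) + (-β) • (x * br * x * y * x * y * x)
        + (α ^ 2 * β) • (x * br * x * y * y) + (β ^ 3) • (x * br * y) + (β ^ 3) • (x * x * br)
        + (α * β ^ 2) • (x * x * br * x) + (-β ^ 2) • (x * x * br * x * x)
        + (2 * α ^ 2 * β) • (x * x * br * x * y) + (-α * β) • (x * x * br * x * y * x)
        + (-α * β) • (x * x * br * x * y * y) + (-α * β) • (x * x * x * br * x * y)
        + (-β ^ 2) • (x * x * x * y * gx) + (α * β) • (x * x * x * y * x * br)
        + (α * β ^ 2) • (x * x * y * gx) + (α * β) • (x * x * y * gx * y * x)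
        + (-β) • (x * x * y * gx * y * x * x) + (-2 * α ^ 2 * β) • (x * x * y * x * br)
        + (α * β) • (x * x * y * x * br * x) + (α * β) • (x * x * y * x * br * y)
        + (α * β) • (x * x * y * x * x * br) + (-β) • (x * x * y * x * x * br * x)
        + (-α * β ^ 2) • (x * y * gx * y) + (-α ^ 2 * β) • (x * y * gx * y * x)
        + (α * β) • (x * y * gx * y * x * x) + (α * β) • (x * y * gx * y * x * y)
        + (β ^ 2) • (x * y * gx * y * y) + (α * β) • (x * y * br) + (α ^ 3 * β) • (x * y * x * br)
        + (-α ^ 2 * β) • (x * y * x * br * x) + β • (x * y * x * br * x * y * x)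
        + (-α ^ 2 * β) • (x * y * x * br * y) + (-α ^ 2 * β) • (x * y * x * x * br)
        + (α * β) • (x * y * x * x * br * x) + (α * β) • (x * y * x * x * br * y)
        + (-β) • (x * y * x * x * y * x * br) + (-α * β) • (y * gx * y * x * x * y)
        + β • (y * gx * y * x * x * y * y) + (-α - α ^ 2 * β) • (y * br)
        + (1 + α * β) • (y * br * y) + (α ^ 2 * β) • (y * x * br * x * y)
        + (-α * β) • (y * x * br * x * y * x) + β • (y * x * br * x * y * x * y)
        + (-α * β) • (y * x * br * x * y * y) + (-α * β) • (y * x * x * br * x * y)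
        + β • (y * x * x * br * x * y * y) + (α * β) • (y * x * x * y * x * br)
        + (-β) • (y * x * x * y * x * br * y) := by
    rintro gx gy br rfl rfl rfl
    simp only [R0elt, Algebra.algebraMap_eq_smul_one, pow_succ, pow_zero, one_mul]
    simp only [hu2, hv2]
    simp only [hu1, hv1, pow_succ, pow_zero, one_mul]
    simp only [mul_add, add_mul, mul_sub, sub_mul, smul_add, smul_sub, smul_smul,
      mul_smul_comm, smul_mul_assoc, mul_one, one_mul, mul_assoc]
    module
  rw [key 0 0 0 (by rw [hx, sub_self]) (by rw [hy, sub_self]) (by rw [hxy, sub_self])]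
  simp

end CubicInverse

section Hecke

variable (α β : R) (n : ℕ)

theorem hbInv_mul_hb (i : Fin (n - 1)) : hbInv R α β n i * hb R α β n i = 1 := by
  rw [hbInv, hb, gb, ← map_mul, ← map_mul, inv_mul_cancel, map_one, map_one]

theorem hb_cubic (i : Fin (n - 1)) :
    hb R α β n i ^ 3 = α • hb R α β n i ^ 2 + β • hb R α β n i + 1 := by
  simpa only [hb, map_pow, map_add, map_smul, map_one] using
    RingQuot.mkAlgHom_rel R (cubicRel.cube (α := α) (β := β) i)

theorem hb_braid (j : Fin (n - 1)) (h : (j : ℕ) + 1 < n - 1) :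
    hb R α β n j * hb R α β n ⟨j + 1, h⟩ * hb R α β n j
      = hb R α β n ⟨j + 1, h⟩ * hb R α β n j * hb R α β n ⟨j + 1, h⟩ := by
  have hg : braidGen n j * braidGen n ⟨j + 1, h⟩ * braidGen n j
      = braidGen n ⟨j + 1, h⟩ * braidGen n j * braidGen n ⟨j + 1, h⟩ :=
    mul_inv_eq_one.mp (braid_mk_eq_one (Or.inr ⟨j, ⟨j + 1, h⟩, rfl, rfl⟩))
  simp only [hb, gb, ← map_mul, hg]

theorem hbInv_cubic (i : Fin (n - 1)) :
    hbInv R α β n i ^ 3 = (-β) • hbInv R α β n i ^ 2 + (-α) • hbInv R α β n i + 1 :=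
  inv_cubic (hb_cubic α β n i) (hbInv_mul_hb α β n i)

theorem mkAlgHom_domCongr_braidInv_gb (i : Fin (n - 1)) :
    RingQuot.mkAlgHom R (cubicRel R α β n) (MonoidAlgebra.domCongr R R (braidInv n) (gb R n i))
      = hbInv R α β n i := by
  rw [gb, MonoidAlgebra.of_apply, MonoidAlgebra.domCongr_single, braidInv_gen]
  rfl

theorem mkAlgHom_domCongr_braidInv_symm_gb (i : Fin (n - 1)) :
    RingQuot.mkAlgHom R (cubicRel R α β n)
        ((MonoidAlgebra.domCongr R R (braidInv n)).symm (gb R n i)) = hbInv R α β n i := by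
  rw [gb, MonoidAlgebra.domCongr_symm, MonoidAlgebra.of_apply, MonoidAlgebra.domCongr_single,
    braidInv_symm_gen]
  rfl

noncomputable def heckeInvEquiv : CubicHecke R (-β) (-α) n ≃ₐ[R] CubicHecke R α β n :=
  RingQuot.algEquivOfRel (MonoidAlgebra.domCongr R R (braidInv n))
    (by
      rintro _ _ ⟨i⟩
      simp only [map_pow, map_add, map_smul, map_one, mkAlgHom_domCongr_braidInv_gb]
      exact hbInv_cubic α β n i)
    (by
      rintro _ _ ⟨i⟩
      simp only [map_pow, map_add, map_smul, map_one, mkAlgHom_domCongr_braidInv_symm_gb]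
      simpa only [neg_neg] using hbInv_cubic (-β) (-α) n i)

theorem heckeInvEquiv_hb (i : Fin (n - 1)) :
    heckeInvEquiv α β n (hb R (-β) (-α) n i) = hbInv R α β n i :=
  (RingQuot.algEquivOfRel_mkAlgHom _ _ _ _).trans (mkAlgHom_domCongr_braidInv_gb α β n i)

theorem heckeInvEquiv_R0elt (j : Fin (n - 1)) (h : (j : ℕ) + 1 < n - 1) :
    heckeInvEquiv α β n
        (R0elt R (-β) (-α) (hb R (-β) (-α) n j) (hb R (-β) (-α) n ⟨j + 1, h⟩))
      = hb R α β n j * R0elt R α β (hb R α β n j) (hb R α β n ⟨j + 1, h⟩) := by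
  rw [← AlgEquiv.coe_toAlgHom, map_R0elt, AlgEquiv.coe_toAlgHom, heckeInvEquiv_hb, heckeInvEquiv_hb]
  exact R0elt_neg_swap_of_mul_eq_one (hb_cubic α β n j) (hb_cubic α β n _) (hb_braid α β n j h)
    (hbInv_mul_hb α β n j) (hbInv_mul_hb α β n _)

theorem heckeInvEquiv_symm_R0elt (j : Fin (n - 1)) (h : (j : ℕ) + 1 < n - 1) :
    (heckeInvEquiv α β n).symm (R0elt R α β (hb R α β n j) (hb R α β n ⟨j + 1, h⟩))
      = hb R (-β) (-α) n j
          * R0elt R (-β) (-α) (hb R (-β) (-α) n j) (hb R (-β) (-α) n ⟨j + 1, h⟩) := by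
  rw [AlgEquiv.symm_apply_eq, map_mul, heckeInvEquiv_hb, heckeInvEquiv_R0elt, ← mul_assoc,
    hbInv_mul_hb, one_mul]

noncomputable def kInvEquiv : KAlg R (-β) (-α) n ≃ₐ[R] KAlg R α β n :=
  RingQuot.algEquivOfRel (heckeInvEquiv α β n)
    (by
      rintro _ _ ⟨j, h⟩
      rw [heckeInvEquiv_R0elt, map_zero, map_zero, map_mul,
        RingQuot.mkAlgHom_eq_zero (KRel.r0 j h), mul_zero])
    (by
      rintro _ _ ⟨j, h⟩
      rw [heckeInvEquiv_symm_R0elt, map_zero, map_zero, map_mul,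
        RingQuot.mkAlgHom_eq_zero (KRel.r0 j h), mul_zero])

theorem kInvEquiv_kb (i : Fin (n - 1)) :
    kInvEquiv α β n (kb R (-β) (-α) n i) = kbInv R α β n i :=
  (RingQuot.algEquivOfRel_mkAlgHom _ _ _ _).trans (congrArg _ (heckeInvEquiv_hb α β n i))

end Hecke

theorem statement_18_general (R : Type) [CommRing R] (α β : R) (n : ℕ) :
    -- the cubic identity for the inverse generators in `H(Q_{α,β},n)`
    (∀ i : Fin (n - 1),
      hbInv R α β n i ^ 3 + β • hbInv R α β n i ^ 2 + α • hbInv R α β n i - 1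
        = -(hbInv R α β n i ^ 3 *
            (hb R α β n i ^ 3 - α • hb R α β n i ^ 2 - β • hb R α β n i - 1)) ∧
      hbInv R α β n i ^ 3 + β • hbInv R α β n i ^ 2 + α • hbInv R α β n i - 1 = 0) ∧
    ∃ φ : CubicHecke R (-β) (-α) n ≃ₐ[R] CubicHecke R α β n,
      -- `φ` is induced by `b_i ↦ b_i⁻¹`
      (∀ i : Fin (n - 1), φ (hb R (-β) (-α) n i) = hbInv R α β n i) ∧
      -- the image of `R₀(j)` with parameters `(−β,−α)` is `b_j·R₀(j)` with parameters
      -- `(α,β)`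
      (∀ (j : Fin (n - 1)) (h : (j : ℕ) + 1 < n - 1),
        φ (R0elt R (-β) (-α) (hb R (-β) (-α) n j) (hb R (-β) (-α) n ⟨(j : ℕ) + 1, h⟩))
          = hb R α β n j *
            R0elt R α β (hb R α β n j) (hb R α β n ⟨(j : ℕ) + 1, h⟩)) ∧
      -- `φ` maps the two-sided ideal `I_n` onto `I_n`
      (φ '' (TwoSidedIdeal.span
          { w | ∃ (j : Fin (n - 1)) (h : (j : ℕ) + 1 < n - 1),
              w = R0elt R (-β) (-α) (hb R (-β) (-α) n j)
                    (hb R (-β) (-α) n ⟨(j : ℕ) + 1, h⟩) } : Set (CubicHecke R (-β) (-α) n))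
        = (TwoSidedIdeal.span
          { w | ∃ (j : Fin (n - 1)) (h : (j : ℕ) + 1 < n - 1),
              w = R0elt R α β (hb R α β n j)
                    (hb R α β n ⟨(j : ℕ) + 1, h⟩) } : Set (CubicHecke R α β n))) ∧
      -- hence an induced isomorphism `K_n(−β,−α) ≅ K_n(α,β)`
      ∃ ψ : KAlg R (-β) (-α) n ≃ₐ[R] KAlg R α β n,
        ∀ i : Fin (n - 1), ψ (kb R (-β) (-α) n i) = kbInv R α β n i := by
  refine ⟨fun i ↦ ⟨inv_cubic_sub_eq (hbInv_mul_hb α β n i),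
      inv_cubic_eq_zero (hb_cubic α β n i) (hbInv_mul_hb α β n i)⟩,
    heckeInvEquiv α β n, heckeInvEquiv_hb α β n, heckeInvEquiv_R0elt α β n,
    TwoSidedIdeal.image_span_eq_span (heckeInvEquiv α β n).toRingEquiv ?_ ?_,
    kInvEquiv α β n, kInvEquiv_kb α β n⟩
  · rintro _ ⟨j, h, rfl⟩
    rw [AlgEquiv.coe_ringEquiv, heckeInvEquiv_R0elt]
    exact TwoSidedIdeal.mul_mem_left _ _ _ (TwoSidedIdeal.subset_span ⟨j, h, rfl⟩)
  · rintro _ ⟨j, h, rfl⟩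
    rw [AlgEquiv.toRingEquiv_symm, AlgEquiv.coe_ringEquiv, heckeInvEquiv_symm_R0elt]
    exact TwoSidedIdeal.mul_mem_left _ _ _ (TwoSidedIdeal.subset_span ⟨j, h, rfl⟩)

/-- The map `b_i ↦ b_i⁻¹` gives an `R`-algebra isomorphism
`H(Q_{−β,−α},n) ≅ H(Q_{α,β},n)` mapping the ideal `I_n` onto `I_n` (with the image of
`R₀(j)` being `b_j·R₀(j)`), and hence an isomorphism `K_n(−β,−α) ≅ K_n(α,β)`. -/
theorem statement_18 (R : Type) [CommRing R] (α β : R) (n : ℕ) (hn : 2 ≤ n) :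
    -- the cubic identity for the inverse generators in `H(Q_{α,β},n)`
    (∀ i : Fin (n - 1),
      hbInv R α β n i ^ 3 + β • hbInv R α β n i ^ 2 + α • hbInv R α β n i - 1
        = -(hbInv R α β n i ^ 3 *
            (hb R α β n i ^ 3 - α • hb R α β n i ^ 2 - β • hb R α β n i - 1)) ∧
      hbInv R α β n i ^ 3 + β • hbInv R α β n i ^ 2 + α • hbInv R α β n i - 1 = 0) ∧
    ∃ φ : CubicHecke R (-β) (-α) n ≃ₐ[R] CubicHecke R α β n,
      -- `φ` is induced by `b_i ↦ b_i⁻¹`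
      (∀ i : Fin (n - 1), φ (hb R (-β) (-α) n i) = hbInv R α β n i) ∧
      -- the image of `R₀(j)` with parameters `(−β,−α)` is `b_j·R₀(j)` with parameters
      -- `(α,β)`
      (∀ (j : Fin (n - 1)) (h : (j : ℕ) + 1 < n - 1),
        φ (R0elt R (-β) (-α) (hb R (-β) (-α) n j) (hb R (-β) (-α) n ⟨(j : ℕ) + 1, h⟩))
          = hb R α β n j *
            R0elt R α β (hb R α β n j) (hb R α β n ⟨(j : ℕ) + 1, h⟩)) ∧
      -- `φ` maps the two-sided ideal `I_n` onto `I_n`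
      (φ '' (TwoSidedIdeal.span
          { w | ∃ (j : Fin (n - 1)) (h : (j : ℕ) + 1 < n - 1),
              w = R0elt R (-β) (-α) (hb R (-β) (-α) n j)
                    (hb R (-β) (-α) n ⟨(j : ℕ) + 1, h⟩) } : Set (CubicHecke R (-β) (-α) n))
        = (TwoSidedIdeal.span
          { w | ∃ (j : Fin (n - 1)) (h : (j : ℕ) + 1 < n - 1),
              w = R0elt R α β (hb R α β n j)
                    (hb R α β n ⟨(j : ℕ) + 1, h⟩) } : Set (CubicHecke R α β n))) ∧
      -- hence an induced isomorphism `K_n(−β,−α) ≅ K_n(α,β)`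
      ∃ ψ : KAlg R (-β) (-α) n ≃ₐ[R] KAlg R α β n,
        ∀ i : Fin (n - 1), ψ (kb R (-β) (-α) n i) = kbInv R α β n i :=
  statement_18_general R α β n
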